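/- Suppose G is a graph such that TS_2(G) is a forest containing an induced star K_{1,3} whose center is the independent set {a,b} and whose leaves are {a,c}, {b,d}, {a,e} for vertices a,b,c,d,e of G. Then the subgraph of G induced by {a,b,c,d,e} has edge set exactly {ad, de, eb, bc, cd}. -/

import Mathlib

open SimpleGraph

/-- `I` is a size-`k` independent set of `G`: a vertex of the token sliding graph. -/
def TSVert {W : Type*} (G : SimpleGraph W) (k : ℕ) (I : Finset W) : Prop :=
  I.card = k ∧ ∀ u ∈ I, ∀ v ∈ I, ¬ G.Adj u v

/-- The token sliding graph `TS_k(G)`: vertices are size-`k` independent sets of `G`,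
two sets adjacent iff they differ by sliding one token along an edge of `G`. -/
def TS {W : Type*} (G : SimpleGraph W) (k : ℕ) :
    SimpleGraph {I : Finset W // TSVert G k I} :=
  SimpleGraph.fromRel fun I J =>
    ∃ u v, ((I : Finset W) : Set W) \ ((J : Finset W) : Set W) = {u} ∧
      ((J : Finset W) : Set W) \ ((I : Finset W) : Set W) = {v} ∧ G.Adj u v

/-- `2K₂`: two disjoint edges, `0-1` and `2-3`. -/
def twoK2 : SimpleGraph (Fin 4) :=
  SimpleGraph.fromRel fun a b => (a = 0 ∧ b = 1) ∨ (a = 2 ∧ b = 3)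

/-- Disjoint union of two simple graphs. -/
def disjUnion' {α β : Type*} (G : SimpleGraph α) (H : SimpleGraph β) :
    SimpleGraph (α ⊕ β) :=
  SimpleGraph.fromRel fun a b =>
    (∃ x y, a = Sum.inl x ∧ b = Sum.inl y ∧ G.Adj x y) ∨
    (∃ x y, a = Sum.inr x ∧ b = Sum.inr y ∧ H.Adj x y)

/-- `nK₁`: `n` isolated vertices. -/
def nK1 (n : ℕ) : SimpleGraph (Fin n) := ⊥

/-- `D r n s`: the tree obtained from the path on `n` vertices by appending `r` leaves
at one endpoint and `s` leaves at the other endpoint. -/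
def D (r n s : ℕ) : SimpleGraph (Fin r ⊕ Fin n ⊕ Fin s) :=
  SimpleGraph.fromRel fun a b =>
    (∃ i j : Fin n, a = Sum.inr (Sum.inl i) ∧ b = Sum.inr (Sum.inl j) ∧ (j : ℕ) = (i : ℕ) + 1) ∨
    (∃ (u : Fin r) (i : Fin n), a = Sum.inl u ∧ b = Sum.inr (Sum.inl i) ∧ (i : ℕ) = 0) ∨
    (∃ (v : Fin s) (i : Fin n), a = Sum.inr (Sum.inr v) ∧ b = Sum.inr (Sum.inl i) ∧ (i : ℕ) = n - 1)

/-- The star `K_{1,s}`: center `0` with `s` leaves. -/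
def star' (s : ℕ) : SimpleGraph (Fin (s + 1)) :=
  SimpleGraph.fromRel fun a _ => a = 0

/-- `G` contains a cycle of length `n`. -/
def HasCycleLen {α : Type*} (G : SimpleGraph α) (n : ℕ) : Prop :=
  ∃ (v : α) (w : G.Walk v v), w.IsCycle ∧ w.length = n

/-- `G` contains a cycle. -/
def HasCycle {α : Type*} (G : SimpleGraph α) : Prop :=
  ∃ (v : α) (w : G.Walk v v), w.IsCycle

/-! Each of the three edges of `TS_2(G)` at `{a, b}` slides one token along an edge of `G`, which
gives `bc`, `ad` and `be`. The non-edges `ab, ac, ae, bd` hold because the sets are independent, and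
`ce` because otherwise `{a, c}` and `{a, e}` would be adjacent in `TS_2(G)`. Finally, a missing edge
`x'y'` after two disjoint slides `x → x'`, `y → y'` from `{x, y}` would make `{x', y'}` independent
and close the 4-cycle `{x, y}, {y, x'}, {x', y'}, {x, y'}` in the forest `TS_2(G)`; applied to the
slides `a → d, b → e` and `a → d, b → c`, this gives `de` and `cd`. -/

namespace SimpleGraph

variable {V : Type*} {G : SimpleGraph V}

lemma IsAcyclic.eq_of_adj_of_adj (hG : G.IsAcyclic) {x y z w : V} (hxy : G.Adj x y)
    (hyz : G.Adj y z) (hxw : G.Adj x w) (hwz : G.Adj w z) (hxz : x ≠ z) : y = w := by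
  have hp : (Walk.cons hxy (Walk.cons hyz .nil)).IsPath := by
    simp [hxy.ne, hyz.ne, hxz]
  have hq : (Walk.cons hxw (Walk.cons hwz .nil)).IsPath := by
    simp [hxw.ne, hwz.ne, hxz]
  have h := (hG.subsingleton_path x z).elim ⟨_, hp⟩ ⟨_, hq⟩
  simpa using congrArg (fun p : G.Path x z => p.1.support) h

end SimpleGraph

section TokenSliding

variable {V : Type*} [DecidableEq V] {G : SimpleGraph V}

lemma TSVert.ne {x y : V} (h : TSVert G 2 {x, y}) : x ≠ y :=
  Finset.card_pair_eq_two_iff.mp h.1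

lemma TSVert.not_adj {x y : V} (h : TSVert G 2 {x, y}) : ¬ G.Adj x y :=
  h.2 x (by simp) y (by simp)

lemma tsVert_pair {x y : V} (hxy : x ≠ y) (h : ¬ G.Adj x y) : TSVert G 2 {x, y} := by
  refine ⟨Finset.card_pair hxy, ?_⟩
  simp only [Finset.mem_insert, Finset.mem_singleton]
  rintro u (rfl | rfl) v (rfl | rfl)
  exacts [G.irrefl, h, fun h' => h h'.symm, G.irrefl]

lemma TS_adj_iff_of_sdiff {k : ℕ} {I J : {I : Finset V // TSVert G k I}} {u v : V}
    (hIJ : (I : Finset V) \ J = {u}) (hJI : (J : Finset V) \ I = {v}) :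
    (TS G k).Adj I J ↔ G.Adj u v := by
  have hne : I ≠ J := by
    rintro rfl
    simp at hIJ
  simp [← Finset.coe_sdiff, hIJ, hJI, TS, hne, adj_comm]

lemma TS_two_adj_iff {I J : {I : Finset V // TSVert G 2 I}} {p q r : V}
    (hI : (I : Finset V) = {p, q}) (hJ : (J : Finset V) = {p, r}) (hqr : q ≠ r) :
    (TS G 2).Adj I J ↔ G.Adj q r := by
  have hpq : p ≠ q := TSVert.ne (hI ▸ I.2)
  have hpr : p ≠ r := TSVert.ne (hJ ▸ J.2)
  apply TS_adj_iff_of_sdiff <;> rw [hI, hJ] <;> ext x <;> simp <;> grind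

lemma adj_of_isAcyclic_TS_two (hG : (TS G 2).IsAcyclic) {x y x' y' : V}
    (hxy : TSVert G 2 {x, y}) (hyx' : TSVert G 2 {y, x'}) (hxy' : TSVert G 2 {x, y'})
    (hx : G.Adj x x') (hy : G.Adj y y') (hx'y' : x' ≠ y') : G.Adj x' y' := by
  by_contra hn
  have hx'y'I := tsVert_pair hx'y' hn
  have e₁ : (TS G 2).Adj ⟨_, hxy⟩ ⟨_, hyx'⟩ :=
    (TS_two_adj_iff (Finset.pair_comm _ _) rfl hx.ne).2 hx
  have e₂ : (TS G 2).Adj ⟨_, hyx'⟩ ⟨_, hx'y'I⟩ :=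
    (TS_two_adj_iff (Finset.pair_comm _ _) rfl hy.ne).2 hy
  have e₃ : (TS G 2).Adj ⟨_, hxy⟩ ⟨_, hxy'⟩ := (TS_two_adj_iff rfl rfl hy.ne).2 hy
  have e₄ : (TS G 2).Adj ⟨_, hxy'⟩ ⟨_, hx'y'I⟩ :=
    (TS_two_adj_iff (Finset.pair_comm _ _) (Finset.pair_comm _ _) hx.ne).2 hx
  have hne : (⟨_, hxy⟩ : {I // TSVert G 2 I}) ≠ ⟨_, hx'y'I⟩ := fun h => by
    have heq : ({x, y} : Finset V) = {x', y'} := congrArg Subtype.val h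
    have hmem : x ∈ ({x', y'} : Finset V) := heq ▸ by simp
    simp only [Finset.mem_insert, Finset.mem_singleton] at hmem
    exact hmem.elim hx.ne hxy'.ne
  have heq : ({y, x'} : Finset V) = {x, y'} :=
    congrArg Subtype.val (hG.eq_of_adj_of_adj e₁ e₂ e₃ e₄ hne)
  have hmem : x' ∈ ({x, y'} : Finset V) := heq ▸ by simp
  simp only [Finset.mem_insert, Finset.mem_singleton] at hmem
  exact hmem.elim hx.ne.symm hx'y'

end TokenSliding

theorem stmt19_general {V : Type*} [DecidableEq V] (G : SimpleGraph V) (a b c d e : V)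
    (hne : [a, b, c, d, e].Pairwise (· ≠ ·))
    (hforest : (TS G 2).IsAcyclic)
    (hab : TSVert G 2 {a, b}) (hac : TSVert G 2 {a, c})
    (hbd : TSVert G 2 {b, d}) (hae : TSVert G 2 {a, e})
    (h1 : (TS G 2).Adj ⟨{a, b}, hab⟩ ⟨{a, c}, hac⟩)
    (h2 : (TS G 2).Adj ⟨{a, b}, hab⟩ ⟨{b, d}, hbd⟩)
    (h3 : (TS G 2).Adj ⟨{a, b}, hab⟩ ⟨{a, e}, hae⟩)
    (h5 : ¬ (TS G 2).Adj ⟨{a, c}, hac⟩ ⟨{a, e}, hae⟩) :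
    G.Adj a d ∧ G.Adj d e ∧ G.Adj e b ∧ G.Adj b c ∧ G.Adj c d ∧
    ¬ G.Adj a b ∧ ¬ G.Adj a c ∧ ¬ G.Adj a e ∧ ¬ G.Adj b d ∧ ¬ G.Adj c e := by
  simp only [List.pairwise_cons, List.mem_cons, List.not_mem_nil] at hne
  have hbc : G.Adj b c := (TS_two_adj_iff rfl rfl (by grind)).1 h1
  have had : G.Adj a d := (TS_two_adj_iff (Finset.pair_comm _ _) rfl (by grind)).1 h2
  have hbe : G.Adj b e := (TS_two_adj_iff rfl rfl (by grind)).1 h3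
  have hce : ¬ G.Adj c e := mt (TS_two_adj_iff rfl rfl (by grind)).2 h5
  have hde : G.Adj d e := adj_of_isAcyclic_TS_two hforest hab hbd hae had hbe (by grind)
  have hdc : G.Adj d c := adj_of_isAcyclic_TS_two hforest hab hbd hac had hbc (by grind)
  exact ⟨had, hde, hbe.symm, hbc, hdc.symm, hab.not_adj, hac.not_adj, hae.not_adj, hbd.not_adj,
    hce⟩

theorem stmt19 {V : Type*} [DecidableEq V] (G : SimpleGraph V) (a b c d e : V)
    (hne : [a, b, c, d, e].Pairwise (· ≠ ·))
    (hforest : (TS G 2).IsAcyclic)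
    (hab : TSVert G 2 {a, b}) (hac : TSVert G 2 {a, c})
    (hbd : TSVert G 2 {b, d}) (hae : TSVert G 2 {a, e})
    (h1 : (TS G 2).Adj ⟨{a, b}, hab⟩ ⟨{a, c}, hac⟩)
    (h2 : (TS G 2).Adj ⟨{a, b}, hab⟩ ⟨{b, d}, hbd⟩)
    (h3 : (TS G 2).Adj ⟨{a, b}, hab⟩ ⟨{a, e}, hae⟩)
    (h4 : ¬ (TS G 2).Adj ⟨{a, c}, hac⟩ ⟨{b, d}, hbd⟩)
    (h5 : ¬ (TS G 2).Adj ⟨{a, c}, hac⟩ ⟨{a, e}, hae⟩)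
    (h6 : ¬ (TS G 2).Adj ⟨{b, d}, hbd⟩ ⟨{a, e}, hae⟩) :
    G.Adj a d ∧ G.Adj d e ∧ G.Adj e b ∧ G.Adj b c ∧ G.Adj c d ∧
    ¬ G.Adj a b ∧ ¬ G.Adj a c ∧ ¬ G.Adj a e ∧ ¬ G.Adj b d ∧ ¬ G.Adj c e :=
  stmt19_general G a b c d e hne hforest hab hac hbd hae h1 h2 h3 h5
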